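/- arXiv:2406.01251 — 2 statements merged into one kernel-verified Lean document; each statement's English description precedes it below -/
import Mathlib

section
/- Let e : ℝ → ℝ³ be differentiable, and suppose that on an interval I, for every t ∈ I with e(t) ≠ 0, the derivative satisfies ė_i(t) = r_i(t) − σ_i·Δ_i(t), where σ_i > 0, e_i(t)·Δ_i(t) ≥ 0, and |r_i(t)| < σ_i·|Δ_i(t)| for all i. Then the Lyapunov function V(t) = ½‖e(t)‖² has strictly negative derivative at every t ∈ I with e(t) ≠ 0; in particular t ↦ ‖e(t)‖ is nonincreasing on any subinterval of I where e stays nonzero. -/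
/-!
Along the flow, `d/dt ½‖e‖² = ⟪e, ė⟫ = ∑ᵢ eᵢ (rᵢ − σᵢ Δᵢ)`. Since `eᵢ Δᵢ ≥ 0`, the damping term
`σᵢ eᵢ Δᵢ = σᵢ |eᵢ| |Δᵢ|` strictly dominates `eᵢ rᵢ ≤ |eᵢ| |rᵢ|` in every channel with `eᵢ ≠ 0`,
and the remaining channels contribute nothing, so the sum is negative as soon as `e ≠ 0`.
A negative derivative of `‖e‖²` on an interval makes `‖e‖` decrease there.
-/

open scoped RealInnerProductSpace

lemma mul_sub_mul_neg_of_abs_lt {x r s d : ℝ} (hx : x ≠ 0) (hxd : 0 ≤ x * d)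
    (hr : |r| < s * |d|) : x * (r - s * d) < 0 := by
  have hxr : x * r ≤ |x| * |r| := (le_abs_self _).trans (abs_mul x r).le
  have hsd : |x| * (s * |d|) = s * (x * d) := by
    rw [mul_left_comm, ← abs_mul, abs_of_nonneg hxd]
  nlinarith [mul_lt_mul_of_pos_left hr (abs_pos.mpr hx)]

lemma EuclideanSpace.inner_neg_of_forall_ne_zero {ι : Type*} [Fintype ι]
    {v w : EuclideanSpace ℝ ι} (hv : v ≠ 0) (h : ∀ i, v i ≠ 0 → v i * w i < 0) :
    ⟪v, w⟫ < 0 := by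
  obtain ⟨i, hi⟩ : ∃ i, v i ≠ 0 := by
    by_contra! hzero
    exact hv (by ext i; simpa using hzero i)
  have hle : ∀ j, v j * w j ≤ 0 := fun j => by
    by_cases hj : v j = 0
    · simp [hj]
    · exact (h j hj).le
  rw [PiLp.inner_apply]
  simp only [RCLike.inner_apply, conj_trivial]
  calc ∑ j, w j * v j = ∑ j, v j * w j := by simp only [mul_comm]
    _ < 0 := Finset.sum_neg' (fun j _ => hle j) ⟨i, Finset.mem_univ i, h i hi⟩

lemma strictAntiOn_norm_of_inner_deriv_neg {F : Type*} [NormedAddCommGroup F]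
    [InnerProductSpace ℝ F] {f : ℝ → F} {J : Set ℝ} (hJ : J.OrdConnected)
    (hf : ∀ t ∈ J, ∃ f', HasDerivAt f f' t ∧ ⟪f t, f'⟫ < 0) :
    StrictAntiOn (‖f ·‖) J := by
  choose! f' hf' hneg using hf
  have hsq : StrictAntiOn (‖f ·‖ ^ 2) J :=
    strictAntiOn_of_hasDerivWithinAt_neg hJ.convex
      (fun t ht => (hf' t ht).norm_sq.continuousAt.continuousWithinAt)
      (fun t ht => (hf' t (interior_subset ht)).norm_sq.hasDerivWithinAt)
      (fun t ht => by linarith [hneg t (interior_subset ht)])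
  exact fun a ha b hb hab => lt_of_pow_lt_pow_left₀ 2 (norm_nonneg _) (hsq ha hb hab)

theorem reconfigured_error_dynamics_lyapunov_general
    (e : ℝ → EuclideanSpace ℝ (Fin 3))
    (r Δ : ℝ → Fin 3 → ℝ) (σ : Fin 3 → ℝ)
    (I : Set ℝ)
    (hode : ∀ t ∈ I, e t ≠ 0 →
      HasDerivAt e (WithLp.toLp 2 (fun i => r t i - σ i * Δ t i : Fin 3 → ℝ) :
        EuclideanSpace ℝ (Fin 3)) t ∧
      (∀ i, 0 ≤ e t i * Δ t i) ∧ (∀ i, |r t i| < σ i * |Δ t i|)) :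
    (∀ t ∈ I, e t ≠ 0 → deriv (fun s => (1 / 2 : ℝ) * ‖e s‖ ^ 2) t < 0) ∧
    (∀ J : Set ℝ, J ⊆ I → J.OrdConnected → (∀ t ∈ J, e t ≠ 0) →
      AntitoneOn (fun t => ‖e t‖) J) := by
  have hdecay : ∀ t ∈ I, e t ≠ 0 → ∃ v, HasDerivAt e v t ∧ ⟪e t, v⟫ < 0 := by
    intro t ht hne
    obtain ⟨hderiv, halign, hdom⟩ := hode t ht hne
    exact ⟨_, hderiv, EuclideanSpace.inner_neg_of_forall_ne_zero hne
      fun i hi => mul_sub_mul_neg_of_abs_lt hi (halign i) (hdom i)⟩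
  refine ⟨fun t ht hne => ?_, fun J hJI hJ hne => ?_⟩
  · obtain ⟨v, hderiv, hneg⟩ := hdecay t ht hne
    rw [(hderiv.norm_sq.const_mul (1 / 2 : ℝ)).deriv]
    linarith
  · exact (strictAntiOn_norm_of_inner_deriv_neg hJ
      fun t ht => hdecay t (hJI ht) (hne t ht)).antitoneOn

/-- If along an interval `I` the error dynamics satisfy
`ė_i = r_i − σ_i Δ_i` with `σ_i > 0`, `e_i Δ_i ≥ 0` and `|r_i| < σ_i |Δ_i|`
whenever `e(t) ≠ 0`, then the Lyapunov function `V = ½‖e‖²` has strictly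
negative derivative at every such point, and `‖e‖` is nonincreasing on any
subinterval of `I` on which `e` stays nonzero. -/
theorem reconfigured_error_dynamics_lyapunov
    (e : ℝ → EuclideanSpace ℝ (Fin 3))
    (r Δ : ℝ → Fin 3 → ℝ) (σ : Fin 3 → ℝ)
    (I : Set ℝ) (hI : I.OrdConnected)
    (hdiff : Differentiable ℝ e)
    (hσ : ∀ i, 0 < σ i)
    (hode : ∀ t ∈ I, e t ≠ 0 →
      HasDerivAt e (WithLp.toLp 2 (fun i => r t i - σ i * Δ t i : Fin 3 → ℝ) :
        EuclideanSpace ℝ (Fin 3)) t ∧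
      (∀ i, 0 ≤ e t i * Δ t i) ∧ (∀ i, |r t i| < σ i * |Δ t i|)) :
    (∀ t ∈ I, e t ≠ 0 → deriv (fun s => (1 / 2 : ℝ) * ‖e s‖ ^ 2) t < 0) ∧
    (∀ J : Set ℝ, J ⊆ I → J.OrdConnected → (∀ t ∈ J, e t ≠ 0) →
      AntitoneOn (fun t => ‖e t‖) J) :=
  reconfigured_error_dynamics_lyapunov_general e r Δ σ I hode
end

section
/- Let K_ω, τ, τ_a > 0 and ν > 0 be real numbers, and suppose the radicand R = 2K_ω²τ²ν² + K_ω² − 4K_ω τ_a τ²ν⁴ − 2K_ω τ_a ν² + 2K_ω τ ν² + 2τ_a²τ²ν⁶ + τ_a²ν⁴ − 2τ_a τ ν⁴ + τ²ν⁴ + 2ν² is nonnegative. Define K_Ω = ( −ν² + ν·√R + τ_a τ ν⁴ − K_ω τ ν² ) / K_ω. Then K_Ω satisfies the bandwidth equation 2 K_Ω² K_ω² − [τ_a τ ν⁴ − ν² − K_ω τ ν² + K_Ω K_ω]² − [−(τ_a + τ) ν³ + K_ω ν]² = 0. -/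
/-!
With `x = K_Ω K_ω`, `a = τ_aτν⁴ − ν² − K_ωτν²` and `b = −(τ_a+τ)ν³ + K_ων`, the bandwidth
equation reads `2x² = (a + x)² + b²`, a quadratic in `x` with roots `a ± √(2a² + b²)`.
The radicand is a sum of squares with `ν²R = 2a² + b²`, so the prescribed gain is the root
`x = a + ν√R`.
-/

theorem two_mul_sq_sub_sq_sub_sq_eq_zero_of_sq_eq {α : Type*} [CommRing α] {a b s x : α}
    (hs : s ^ 2 = 2 * a ^ 2 + b ^ 2) (hx : x = a + s) :
    2 * x ^ 2 - (a + x) ^ 2 - b ^ 2 = 0 := by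
  subst hx
  linear_combination hs

theorem bandwidth_radicand_eq_sum_sq (Kω τ τa ν : ℝ) :
    2 * Kω ^ 2 * τ ^ 2 * ν ^ 2 + Kω ^ 2
      - 4 * Kω * τa * τ ^ 2 * ν ^ 4 - 2 * Kω * τa * ν ^ 2
      + 2 * Kω * τ * ν ^ 2 + 2 * τa ^ 2 * τ ^ 2 * ν ^ 6 + τa ^ 2 * ν ^ 4
      - 2 * τa * τ * ν ^ 4 + τ ^ 2 * ν ^ 4 + 2 * ν ^ 2
      = 2 * ν ^ 2 * (τa * τ * ν ^ 2 - 1 - Kω * τ) ^ 2 + (Kω - (τa + τ) * ν ^ 2) ^ 2 := by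
  ring

theorem outer_loop_gain_update_law_general
    (Kω τ τa ν : ℝ) (hKω : 0 < Kω)
    (R : ℝ)
    (hR : R = 2 * Kω ^ 2 * τ ^ 2 * ν ^ 2 + Kω ^ 2
      - 4 * Kω * τa * τ ^ 2 * ν ^ 4 - 2 * Kω * τa * ν ^ 2
      + 2 * Kω * τ * ν ^ 2 + 2 * τa ^ 2 * τ ^ 2 * ν ^ 6 + τa ^ 2 * ν ^ 4
      - 2 * τa * τ * ν ^ 4 + τ ^ 2 * ν ^ 4 + 2 * ν ^ 2)
    (KΩ : ℝ)
    (hKΩ : KΩ = (-ν ^ 2 + ν * Real.sqrt R + τa * τ * ν ^ 4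
      - Kω * τ * ν ^ 2) / Kω) :
    2 * KΩ ^ 2 * Kω ^ 2
      - (τa * τ * ν ^ 4 - ν ^ 2 - Kω * τ * ν ^ 2 + KΩ * Kω) ^ 2
      - (-(τa + τ) * ν ^ 3 + Kω * ν) ^ 2 = 0 := by
  rw [bandwidth_radicand_eq_sum_sq] at hR
  have hR_nonneg : 0 ≤ R := by rw [hR]; positivity
  have hroot : KΩ * Kω = (τa * τ * ν ^ 4 - ν ^ 2 - Kω * τ * ν ^ 2) + ν * Real.sqrt R := by
    rw [hKΩ]
    field_simp
    ring
  have hdisc : (ν * Real.sqrt R) ^ 2 = 2 * (τa * τ * ν ^ 4 - ν ^ 2 - Kω * τ * ν ^ 2) ^ 2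
      + (-(τa + τ) * ν ^ 3 + Kω * ν) ^ 2 := by
    rw [mul_pow, Real.sq_sqrt hR_nonneg, hR]
    ring
  linear_combination two_mul_sq_sub_sq_sub_sq_eq_zero_of_sq_eq hdisc hroot

/-- The analytical outer-loop gain update law: the gain
`K_Ω = (−ν² + ν√R + τ_aτν⁴ − K_ωτν²)/K_ω`, with `R` the displayed radicand,
satisfies the bandwidth equation
`2K_Ω²K_ω² − [τ_aτν⁴ − ν² − K_ωτν² + K_ΩK_ω]² − [−(τ_a+τ)ν³ + K_ων]² = 0`. -/
theorem outer_loop_gain_update_law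
    (Kω τ τa ν : ℝ) (hKω : 0 < Kω) (hτ : 0 < τ) (hτa : 0 < τa) (hν : 0 < ν)
    (R : ℝ)
    (hR : R = 2 * Kω ^ 2 * τ ^ 2 * ν ^ 2 + Kω ^ 2
      - 4 * Kω * τa * τ ^ 2 * ν ^ 4 - 2 * Kω * τa * ν ^ 2
      + 2 * Kω * τ * ν ^ 2 + 2 * τa ^ 2 * τ ^ 2 * ν ^ 6 + τa ^ 2 * ν ^ 4
      - 2 * τa * τ * ν ^ 4 + τ ^ 2 * ν ^ 4 + 2 * ν ^ 2)
    (hRnn : 0 ≤ R)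
    (KΩ : ℝ)
    (hKΩ : KΩ = (-ν ^ 2 + ν * Real.sqrt R + τa * τ * ν ^ 4
      - Kω * τ * ν ^ 2) / Kω) :
    2 * KΩ ^ 2 * Kω ^ 2
      - (τa * τ * ν ^ 4 - ν ^ 2 - Kω * τ * ν ^ 2 + KΩ * Kω) ^ 2
      - (-(τa + τ) * ν ^ 3 + Kω * ν) ^ 2 = 0 :=
  outer_loop_gain_update_law_general Kω τ τa ν hKω R hR KΩ hKΩ
end
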